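/- With notation as in the regularized integral paper: Res_{z=0}(P̂² Ẑ dz) = π⁴(E₄ − Ê₂²)/9, where P̂(z) = ℘(z) + (π²/3)E₂ − π/Im τ, Ẑ(z) = ζ(z) − (π²/3)E₂ z − (π/Im τ)(z̄−z), Ê₂ = E₂ − 3/(π Im τ), and E₄ is the normalized Eisenstein series of weight 4. -/

import Mathlib

open Metric Filter Topology Complex

/-- The lattice point `m + nτ`. -/
noncomputable def lpt (τ : ℂ) (p : ℤ × ℤ) : ℂ := (p.1 : ℂ) + (p.2 : ℂ) * τ

/-- The Eisenstein series `G_k(τ) = Σ_{λ ∈ Λ_τ \ {0}} λ^{-k}`. -/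
noncomputable def Gk (τ : ℂ) (k : ℕ) : ℂ :=
  ∑' p : {p : ℤ × ℤ // p ≠ 0}, 1 / (lpt τ p.1) ^ k

/-- The Weierstrass zeta function of `Λ_τ`. -/
noncomputable def wzeta (τ : ℂ) (z : ℂ) : ℂ :=
  1 / z + ∑' p : {p : ℤ × ℤ // p ≠ 0},
    (1 / (z + lpt τ p.1) - 1 / lpt τ p.1 + z / (lpt τ p.1) ^ 2)

/-- The Weierstrass ℘-function of `Λ_τ`. -/
noncomputable def wp (τ : ℂ) (z : ℂ) : ℂ :=
  1 / z ^ 2 + ∑' p : {p : ℤ × ℤ // p ≠ 0},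
    (1 / (z + lpt τ p.1) ^ 2 - 1 / (lpt τ p.1) ^ 2)

/-- `Ẑ(z,z̄) = ζ(z;τ) - (π²/3)E₂ z - (π/Im τ)(z̄ - z)`. -/
noncomputable def Zhat (τ E₂ : ℂ) (z : ℂ) : ℂ :=
  wzeta τ z - ((Real.pi : ℂ) ^ 2 / 3) * E₂ * z -
    ((Real.pi / τ.im : ℝ) : ℂ) * (starRingEnd ℂ z - z)

/-- `P̂(z) = ℘(z;τ) + (π²/3)E₂ - π/Im τ`. -/
noncomputable def Phat (τ E₂ : ℂ) (z : ℂ) : ℂ :=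
  wp τ z + ((Real.pi : ℂ) ^ 2 / 3) * E₂ - ((Real.pi / τ.im : ℝ) : ℂ)

/-- `Ê₂ = E₂ - 3/(π Im τ)`. -/
noncomputable def Ehat2 (τ E₂ : ℂ) : ℂ := E₂ - ((3 / (Real.pi * τ.im) : ℝ) : ℂ)

/-- `IsRes f c R` means: the residue of `f dz` at `c`, defined as
`(1/2πi) lim_{ε→0} ∮_{|z-c|=ε} f(z) dz`, exists and equals `R`. -/
def IsRes (f : ℂ → ℂ) (c R : ℂ) : Prop :=
  Tendsto (fun ε : ℝ => (2 * (Real.pi : ℂ) * Complex.I)⁻¹ * ∮ z in C(c, ε), f z)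
    (𝓝[>] (0 : ℝ)) (𝓝 R)

/-!
On the circle `|z| = ε` we have `z̄ = ε² / z`, so there `Ẑ(z) = c_ε / z + (ζ(z) - 1/z) - a z` with
`a = (π²/3) Ê₂` and `c_ε = 1 - π ε² / Im τ`, while `P̂(z) = 1/z² + a + (℘(z) - 1/z²)`. Expanding
`P̂² Ẑ`, the pure poles contribute `(c_ε - 2) a²` to the residue, and integrating the lattice sums
termwise, `(℘ - 1/z²) / z³` and `(ζ - 1/z) / z⁴` contribute `3 G₄` and `-G₄`, hence `(6 c_ε - 1) G₄`
in total. Since `℘ - 1/z² = O(z)` and `ζ - 1/z = O(z²)` uniformly near `0`, everything else is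
bounded on the circle, so its integral is `O(ε)`. Letting `ε → 0` leaves `5 G₄ - a²`.
-/

open MeasureTheory Real
open scoped UpperHalfPlane

namespace circleIntegral

lemma integral_const_div_pow_of_ne_one (c : ℂ) {n : ℕ} (hn : n ≠ 1) (R : ℝ) :
    ∮ z in C(0, R), c / z ^ n = 0 := by
  have h : (fun z : ℂ => c / z ^ n) = fun z => c * (z - 0) ^ (-(n : ℤ)) := by
    ext z
    simp [div_eq_mul_inv]
  rw [h, integral_const_mul, integral_sub_zpow_of_ne (by omega), mul_zero]

lemma integral_const_div (c : ℂ) {R : ℝ} (hR : R ≠ 0) :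
    ∮ z in C(0, R), c / z = 2 * π * I * c := by
  simp_rw [div_eq_mul_inv]
  rw [integral_const_mul]
  simpa [mul_comm] using congrArg (c * ·) (integral_sub_center_inv 0 hR)

lemma _root_.circleIntegrable_div_pow {f : ℂ → ℂ} {R : ℝ} (hR : 0 < R)
    (hf : ContinuousOn f (sphere 0 R)) (n : ℕ) :
    CircleIntegrable (fun z => f z / z ^ n) 0 R :=
  (hf.div (continuousOn_id.pow n) fun z hz =>
    pow_ne_zero n (ne_zero_of_mem_sphere hR.ne' ⟨z, hz⟩)).circleIntegrable hR.le

lemma integral_div_sq_add_div_add {R : ℝ} (hR : 0 < R) (a b : ℂ) {g : ℂ → ℂ}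
    (hg : DifferentiableOn ℂ g (closedBall 0 R)) :
    ∮ z in C(0, R), (a / z ^ 2 + b / z + g z) = 2 * π * I * b := by
  have ha : CircleIntegrable (fun z => a / z ^ 2) 0 R :=
    circleIntegrable_div_pow hR continuousOn_const 2
  have hb : CircleIntegrable (fun z => b / z) 0 R := by
    simpa using circleIntegrable_div_pow hR continuousOn_const 1
  have hg' : CircleIntegrable g 0 R :=
    (hg.continuousOn.mono sphere_subset_closedBall).circleIntegrable hR.le
  rw [integral_add (f := fun z => a / z ^ 2 + b / z) (ha.add hb) hg', integral_add ha hb,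
    integral_const_div_pow_of_ne_one _ (by norm_num), integral_const_div _ hR.ne',
    (hg.diffContOnCl_ball subset_rfl).circleIntegral_eq_zero hR.le]
  ring

lemma integral_tsum {E : Type*} [NormedAddCommGroup E] [NormedSpace ℂ E] [CompleteSpace E]
    {ι : Type*} [Countable ι] {F : ι → ℂ → E} {c : ℂ} {R : ℝ} {b : ι → ℝ} (hR : 0 ≤ R)
    (hF : ∀ i, CircleIntegrable (F i) c R) (hb : Summable b)
    (hFb : ∀ i, ∀ z ∈ sphere c R, ‖F i z‖ ≤ b i) :
    ∮ z in C(c, R), ∑' i, F i z = ∑' i, ∮ z in C(c, R), F i z := by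
  have hmem (θ : ℝ) : circleMap c R θ ∈ sphere c R := circleMap_mem_sphere c hR θ
  refine (intervalIntegral.hasSum_integral_of_dominated_convergence
    (F := fun i θ => deriv (circleMap c R) θ • F i (circleMap c R θ)) (fun i _ => R * b i)
    (fun i => ?_) (fun i => ?_) ?_ intervalIntegrable_const ?_).tsum_eq.symm
  · exact (intervalIntegrable_iff.mp (hF i).out).aestronglyMeasurable
  · refine ae_of_all _ fun θ _ => ?_
    rw [norm_smul, deriv_circleMap, norm_mul, norm_circleMap_zero, norm_I, mul_one,
      abs_of_nonneg hR]
    exact mul_le_mul_of_nonneg_left (hFb i _ (hmem θ)) hR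
  · exact ae_of_all _ fun _ _ => hb.mul_left R
  · exact ae_of_all _ fun θ _ =>
      (hb.of_norm_bounded fun i => hFb i _ (hmem θ)).hasSum.const_smul _

lemma tendsto_two_pi_I_inv_mul_integral_zero {f : ℝ → ℂ → ℂ} {K : ℝ}
    (hf : ∀ᶠ ε in 𝓝[>] 0, ∀ z ∈ sphere (0 : ℂ) ε, ‖f ε z‖ ≤ K) :
    Tendsto (fun ε => (2 * π * I)⁻¹ * ∮ z in C(0, ε), f ε z) (𝓝[>] 0) (𝓝 0) := by
  have hlin : Tendsto (fun ε : ℝ => ε * K) (𝓝[>] 0) (𝓝 0) :=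
    tendsto_nhdsWithin_of_tendsto_nhds (by simpa using (continuous_mul_const K).tendsto 0)
  refine squeeze_zero_norm' ?_ hlin
  filter_upwards [hf, self_mem_nhdsWithin] with ε hε hpos
  simpa using norm_two_pi_i_inv_smul_integral_le_of_norm_le_const (le_of_lt hpos) hε

end circleIntegral

section LatticeTerms

noncomputable def wpTerm (l z : ℂ) : ℂ := 1 / (z + l) ^ 2 - 1 / l ^ 2

noncomputable def wzetaTerm (l z : ℂ) : ℂ := 1 / (z + l) - 1 / l + z / l ^ 2

variable {l z : ℂ}

lemma add_ne_zero_of_norm_lt (h : ‖z‖ < ‖l‖) : z + l ≠ 0 := by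
  rw [← neg_neg l, ← sub_eq_add_neg, sub_ne_zero]
  rintro rfl
  simp at h

lemma half_norm_le_norm_add (h : 2 * ‖z‖ < ‖l‖) : ‖l‖ / 2 ≤ ‖z + l‖ := by
  have := norm_sub_norm_le l (-z)
  rw [norm_neg, sub_neg_eq_add, add_comm] at this
  linarith

lemma norm_wpTerm_le (h : 2 * ‖z‖ < ‖l‖) : ‖wpTerm l z‖ ≤ 10 * ‖z‖ / ‖l‖ ^ 3 := by
  have hl : 0 < ‖l‖ := by linarith [norm_nonneg z]
  have hl0 : l ≠ 0 := norm_pos_iff.mp hl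
  have hzl0 : z + l ≠ 0 := add_ne_zero_of_norm_lt (by linarith [norm_nonneg z])
  have hnum : ‖2 * l + z‖ ≤ 5 / 2 * ‖l‖ := by
    calc ‖2 * l + z‖ ≤ ‖2 * l‖ + ‖z‖ := norm_add_le _ _
    _ ≤ 5 / 2 * ‖l‖ := by rw [norm_mul, Complex.norm_two]; linarith
  calc ‖wpTerm l z‖ = ‖z‖ * ‖2 * l + z‖ / (‖l‖ ^ 2 * ‖z + l‖ ^ 2) := by
        rw [wpTerm, ← norm_pow, ← norm_pow, ← norm_mul, ← norm_mul, ← norm_div, ← norm_neg]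
        congr 1
        field_simp
        ring
  _ ≤ ‖z‖ * (5 / 2 * ‖l‖) / (‖l‖ ^ 2 * (‖l‖ / 2) ^ 2) := by
        gcongr
        exact half_norm_le_norm_add h
  _ = 10 * ‖z‖ / ‖l‖ ^ 3 := by field_simp; ring

lemma norm_wzetaTerm_le (h : 2 * ‖z‖ < ‖l‖) : ‖wzetaTerm l z‖ ≤ 2 * ‖z‖ ^ 2 / ‖l‖ ^ 3 := by
  have hl : 0 < ‖l‖ := by linarith [norm_nonneg z]
  have hl0 : l ≠ 0 := norm_pos_iff.mp hl
  have hzl0 : z + l ≠ 0 := add_ne_zero_of_norm_lt (by linarith [norm_nonneg z])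
  calc ‖wzetaTerm l z‖ = ‖z‖ ^ 2 / (‖l‖ ^ 2 * ‖z + l‖) := by
        rw [wzetaTerm, ← norm_pow, ← norm_pow, ← norm_mul, ← norm_div]
        congr 1
        field_simp
        ring
  _ ≤ ‖z‖ ^ 2 / (‖l‖ ^ 2 * (‖l‖ / 2)) := by
        gcongr
        exact half_norm_le_norm_add h
  _ = 2 * ‖z‖ ^ 2 / ‖l‖ ^ 3 := by field_simp

lemma continuousOn_wpTerm (l : ℂ) : ContinuousOn (wpTerm l) (ball 0 ‖l‖) := by
  have : ∀ z ∈ ball (0 : ℂ) ‖l‖, z + l ≠ 0 := fun z hz =>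
    add_ne_zero_of_norm_lt (mem_ball_zero_iff.mp hz)
  unfold wpTerm
  fun_prop (disch := simp_all)

lemma continuousOn_wzetaTerm (l : ℂ) : ContinuousOn (wzetaTerm l) (ball 0 ‖l‖) := by
  have : ∀ z ∈ ball (0 : ℂ) ‖l‖, z + l ≠ 0 := fun z hz =>
    add_ne_zero_of_norm_lt (mem_ball_zero_iff.mp hz)
  unfold wzetaTerm
  fun_prop (disch := simp_all)

lemma circleIntegral_wpTerm_div_pow_three {R : ℝ} (hR : 0 < R) (hl : 2 * R < ‖l‖) :
    ∮ z in C(0, R), wpTerm l z / z ^ 3 = 2 * π * I * (3 / l ^ 4) := by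
  have hl0 : l ≠ 0 := norm_pos_iff.mp (by linarith)
  have hzl : ∀ z ∈ closedBall (0 : ℂ) R, z + l ≠ 0 := fun z hz =>
    add_ne_zero_of_norm_lt (by rw [mem_closedBall_zero_iff] at hz; linarith)
  rw [circleIntegral.integral_congr hR.le (g := fun z =>
    -2 / l ^ 3 / z ^ 2 + 3 / l ^ 4 / z + (-4 * l - 3 * z) / (l ^ 4 * (z + l) ^ 2))]
  · exact circleIntegral.integral_div_sq_add_div_add hR _ _ (by fun_prop (disch := simp_all))
  · intro z hz
    have hz0 : z ≠ 0 := ne_zero_of_mem_sphere hR.ne' ⟨z, hz⟩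
    have := hzl z (sphere_subset_closedBall hz)
    simp only [wpTerm]
    field_simp
    ring

lemma circleIntegral_wzetaTerm_div_pow_four {R : ℝ} (hR : 0 < R) (hl : 2 * R < ‖l‖) :
    ∮ z in C(0, R), wzetaTerm l z / z ^ 4 = 2 * π * I * (-1 / l ^ 4) := by
  have hl0 : l ≠ 0 := norm_pos_iff.mp (by linarith)
  have hzl : ∀ z ∈ closedBall (0 : ℂ) R, z + l ≠ 0 := fun z hz =>
    add_ne_zero_of_norm_lt (by rw [mem_closedBall_zero_iff] at hz; linarith)
  rw [circleIntegral.integral_congr hR.le (g := fun z =>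
    1 / l ^ 3 / z ^ 2 + -1 / l ^ 4 / z + 1 / (l ^ 4 * (z + l)))]
  · exact circleIntegral.integral_div_sq_add_div_add hR _ _ (by fun_prop (disch := simp_all))
  · intro z hz
    have hz0 : z ≠ 0 := ne_zero_of_mem_sphere hR.ne' ⟨z, hz⟩
    have := hzl z (sphere_subset_closedBall hz)
    simp only [wzetaTerm]
    field_simp
    ring

end LatticeTerms

section Lattice

variable (τ : ℍ)

lemma r_le_norm_lpt {p : ℤ × ℤ} (hp : p ≠ 0) : EisensteinSeries.r τ ≤ ‖lpt τ p‖ := by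
  have hlpt : lpt τ p = ((p.2 : ℝ) : ℂ) * τ + ((p.1 : ℝ) : ℂ) := by simp [lpt, add_comm]
  rw [hlpt]
  rcases eq_or_ne p.2 0 with h2 | h2
  · have h1 : p.1 ≠ 0 := fun h1 => hp (Prod.ext h1 h2)
    exact EisensteinSeries.auxbound2 τ _ (one_le_sq_iff_one_le_abs _ |>.mpr
      (by exact_mod_cast Int.one_le_abs h1))
  · exact EisensteinSeries.auxbound1 τ _ (one_le_sq_iff_one_le_abs _ |>.mpr
      (by exact_mod_cast Int.one_le_abs h2))

variable {τ} in
lemma two_mul_norm_lt_norm_lpt {z : ℂ} (hz : z ∈ ball (0 : ℂ) (EisensteinSeries.r τ / 2))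
    (p : {p : ℤ × ℤ // p ≠ 0}) : 2 * ‖z‖ < ‖lpt τ p.1‖ := by
  linarith [mem_ball_zero_iff.mp hz, r_le_norm_lpt τ p.2]

variable {τ} in
lemma mem_ball_norm_lpt {z : ℂ} (hz : z ∈ ball (0 : ℂ) (EisensteinSeries.r τ / 2))
    (p : {p : ℤ × ℤ // p ≠ 0}) : z ∈ ball 0 ‖lpt τ p.1‖ :=
  mem_ball_zero_iff.mpr (by linarith [two_mul_norm_lt_norm_lpt hz p, norm_nonneg z])

lemma summable_div_norm_lpt_pow_three (c : ℝ) :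
    Summable fun p : {p : ℤ × ℤ // p ≠ 0} => c / ‖lpt τ p.1‖ ^ 3 := by
  have hinj : Function.Injective fun p : {p : ℤ × ℤ // p ≠ 0} => ![p.1.2, p.1.1] := by
    intro p q hpq
    simp only [Matrix.vecCons_inj, and_true] at hpq
    exact Subtype.ext (Prod.ext hpq.2 hpq.1)
  refine (((EisensteinSeries.summable_norm_eisSummand (k := 3) le_rfl τ).comp_injective
    hinj).mul_left c).congr fun p => ?_
  simp [EisensteinSeries.eisSummand, lpt, add_comm, div_eq_mul_inv]

end Lattice

noncomputable def wpTail (τ z : ℂ) : ℂ := ∑' p : {p : ℤ × ℤ // p ≠ 0}, wpTerm (lpt τ p.1) z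

noncomputable def wzetaTail (τ z : ℂ) : ℂ := ∑' p : {p : ℤ × ℤ // p ≠ 0}, wzetaTerm (lpt τ p.1) z

noncomputable def invNormCubeSum (τ : ℂ) : ℝ := ∑' p : {p : ℤ × ℤ // p ≠ 0}, 1 / ‖lpt τ p.1‖ ^ 3

lemma wp_eq_add_wpTail (τ z : ℂ) : wp τ z = 1 / z ^ 2 + wpTail τ z := rfl

lemma wzeta_eq_add_wzetaTail (τ z : ℂ) : wzeta τ z = 1 / z + wzetaTail τ z := rfl

section Tails

variable (τ : ℍ)

lemma invNormCubeSum_nonneg : 0 ≤ invNormCubeSum τ := tsum_nonneg fun _ => by positivity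

lemma norm_tsum_le_mul_invNormCubeSum {f : {p : ℤ × ℤ // p ≠ 0} → ℂ} {c : ℝ}
    (hf : ∀ p, ‖f p‖ ≤ c / ‖lpt τ p.1‖ ^ 3) : ‖∑' p, f p‖ ≤ c * invNormCubeSum τ :=
  tsum_of_norm_bounded
    (by simpa only [mul_one_div, invNormCubeSum] using
      (summable_div_norm_lpt_pow_three τ 1).hasSum.mul_left c) hf

variable {τ} {z : ℂ}

lemma norm_wpTail_le (hz : z ∈ ball (0 : ℂ) (EisensteinSeries.r τ / 2)) :
    ‖wpTail τ z‖ ≤ 10 * ‖z‖ * invNormCubeSum τ :=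
  norm_tsum_le_mul_invNormCubeSum τ fun p => norm_wpTerm_le (two_mul_norm_lt_norm_lpt hz p)

lemma norm_wzetaTail_le (hz : z ∈ ball (0 : ℂ) (EisensteinSeries.r τ / 2)) :
    ‖wzetaTail τ z‖ ≤ 2 * ‖z‖ ^ 2 * invNormCubeSum τ :=
  norm_tsum_le_mul_invNormCubeSum τ fun p => norm_wzetaTerm_le (two_mul_norm_lt_norm_lpt hz p)

lemma continuousOn_wpTail : ContinuousOn (wpTail τ) (ball 0 (EisensteinSeries.r τ / 2)) := by
  refine continuousOn_tsum (u := fun p => 10 * (EisensteinSeries.r τ / 2) / ‖lpt τ p.1‖ ^ 3)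
    (fun p => (continuousOn_wpTerm _).mono fun z hz => mem_ball_norm_lpt hz p)
    (summable_div_norm_lpt_pow_three τ (10 * (EisensteinSeries.r τ / 2))) fun p z hz => ?_
  refine (norm_wpTerm_le (two_mul_norm_lt_norm_lpt hz p)).trans ?_
  gcongr
  exact (mem_ball_zero_iff.mp hz).le

lemma continuousOn_wzetaTail :
    ContinuousOn (wzetaTail τ) (ball 0 (EisensteinSeries.r τ / 2)) := by
  refine continuousOn_tsum (u := fun p => 2 * (EisensteinSeries.r τ / 2) ^ 2 / ‖lpt τ p.1‖ ^ 3)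
    (fun p => (continuousOn_wzetaTerm _).mono fun z hz => mem_ball_norm_lpt hz p)
    (summable_div_norm_lpt_pow_three τ (2 * (EisensteinSeries.r τ / 2) ^ 2)) fun p z hz => ?_
  refine (norm_wzetaTerm_le (two_mul_norm_lt_norm_lpt hz p)).trans ?_
  gcongr
  exact (mem_ball_zero_iff.mp hz).le

variable {ε : ℝ}

lemma sphere_subset_ball_r (hεr : 2 * ε < EisensteinSeries.r τ) :
    sphere (0 : ℂ) ε ⊆ ball 0 (EisensteinSeries.r τ / 2) := fun z hz => by
  rw [mem_ball_zero_iff, mem_sphere_zero_iff_norm.mp hz]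
  linarith

lemma circleIntegral_wpTail_div_pow_three (hε : 0 < ε) (hεr : 2 * ε < EisensteinSeries.r τ) :
    ∮ z in C(0, ε), wpTail τ z / z ^ 3 = 2 * π * I * (3 * Gk τ 4) := by
  have hsub := sphere_subset_ball_r hεr
  have hbound (p : {p : ℤ × ℤ // p ≠ 0}) (z : ℂ) (hz : z ∈ sphere 0 ε) :
      ‖wpTerm (lpt τ p.1) z / z ^ 3‖ ≤ 10 / ε ^ 2 / ‖lpt τ p.1‖ ^ 3 := by
    have h := norm_wpTerm_le (two_mul_norm_lt_norm_lpt (hsub hz) p)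
    rw [norm_div, norm_pow, mem_sphere_zero_iff_norm.mp hz] at *
    calc ‖wpTerm (lpt τ p.1) z‖ / ε ^ 3 ≤ 10 * ε / ‖lpt τ p.1‖ ^ 3 / ε ^ 3 := by gcongr
    _ = 10 / ε ^ 2 / ‖lpt τ p.1‖ ^ 3 := by field_simp
  simp_rw [wpTail, ← tsum_div_const]
  rw [circleIntegral.integral_tsum hε.le (fun p => circleIntegrable_div_pow hε
      ((continuousOn_wpTerm _).mono fun z hz => mem_ball_norm_lpt (hsub hz) p) 3)
    (summable_div_norm_lpt_pow_three τ _) hbound, Gk, ← tsum_mul_left, ← tsum_mul_left]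
  refine tsum_congr fun p => ?_
  rw [circleIntegral_wpTerm_div_pow_three hε (hεr.trans_le (r_le_norm_lpt τ p.2))]
  ring

lemma circleIntegral_wzetaTail_div_pow_four (hε : 0 < ε) (hεr : 2 * ε < EisensteinSeries.r τ) :
    ∮ z in C(0, ε), wzetaTail τ z / z ^ 4 = 2 * π * I * -Gk τ 4 := by
  have hsub := sphere_subset_ball_r hεr
  have hbound (p : {p : ℤ × ℤ // p ≠ 0}) (z : ℂ) (hz : z ∈ sphere 0 ε) :
      ‖wzetaTerm (lpt τ p.1) z / z ^ 4‖ ≤ 2 / ε ^ 2 / ‖lpt τ p.1‖ ^ 3 := by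
    have h := norm_wzetaTerm_le (two_mul_norm_lt_norm_lpt (hsub hz) p)
    rw [norm_div, norm_pow, mem_sphere_zero_iff_norm.mp hz] at *
    calc ‖wzetaTerm (lpt τ p.1) z‖ / ε ^ 4 ≤ 2 * ε ^ 2 / ‖lpt τ p.1‖ ^ 3 / ε ^ 4 := by gcongr
    _ = 2 / ε ^ 2 / ‖lpt τ p.1‖ ^ 3 := by field_simp
  simp_rw [wzetaTail, ← tsum_div_const]
  rw [circleIntegral.integral_tsum hε.le (fun p => circleIntegrable_div_pow hε
      ((continuousOn_wzetaTerm _).mono fun z hz => mem_ball_norm_lpt (hsub hz) p) 4)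
    (summable_div_norm_lpt_pow_three τ _) hbound, Gk, ← tsum_neg, ← tsum_mul_left]
  refine tsum_congr fun p => ?_
  rw [circleIntegral_wzetaTerm_div_pow_four hε (hεr.trans_le (r_le_norm_lpt τ p.2))]
  ring

end Tails

section Laurent

/-- What `sq_mul_eq_add_laurentRemainder` leaves over, written in `u = w / z` and `v = s / z²`:
a polynomial, hence bounded as long as `w = O(z)` and `s = O(z²)`. -/
noncomputable def laurentRemainder (a c u v z : ℂ) : ℂ :=
  2 * (u * z + a) * v + u * (c * (u * z + 2 * a) - 2 * a) + (u * z + a) ^ 2 * v * z ^ 2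
    - a * (u * z + a) ^ 2 * z

lemma sq_mul_eq_add_laurentRemainder (a c w s : ℂ) {z : ℂ} (hz : z ≠ 0) :
    (1 / z ^ 2 + a + w) ^ 2 * (c / z + s - a * z) =
      c / z ^ 5 + (2 * c - 1) * a / z ^ 3 + (c - 2) * a ^ 2 / z
        + (s / z ^ 4 + 2 * c * (w / z ^ 3)) + laurentRemainder a c (w / z) (s / z ^ 2) z := by
  rw [laurentRemainder]
  field_simp
  ring

lemma exists_norm_laurentRemainder_le (a : ℂ) (M : ℝ) :
    ∃ K, ∀ c u v z : ℂ, ‖c‖ ≤ M → ‖u‖ ≤ M → ‖v‖ ≤ M → ‖z‖ ≤ M →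
      ‖laurentRemainder a c u v z‖ ≤ K := by
  obtain ⟨K, hK⟩ := (isCompact_closedBall (0 : ℂ × ℂ × ℂ × ℂ) M).exists_bound_of_continuousOn
    (f := fun x => laurentRemainder a x.1 x.2.1 x.2.2.1 x.2.2.2)
    (by unfold laurentRemainder; fun_prop)
  exact ⟨K, fun c u v z hc hu hv hz => hK (c, u, v, z) (by simp [*])⟩

end Laurent

section OnCircle

variable (τ : ℍ) (E₂ : ℂ)

lemma Phat_eq (z : ℂ) : Phat τ E₂ z = 1 / z ^ 2 + π ^ 2 / 3 * Ehat2 τ E₂ + wpTail τ z := by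
  have := τ.im_pos.ne'
  rw [Phat, wp_eq_add_wpTail, Ehat2]
  push_cast
  field_simp
  ring

lemma Zhat_eq {z : ℂ} (hz : z ≠ 0) :
    Zhat τ E₂ z = ((1 - π / τ.im * ‖z‖ ^ 2 : ℝ) : ℂ) / z + wzetaTail τ z
      - π ^ 2 / 3 * Ehat2 τ E₂ * z := by
  have := τ.im_pos.ne'
  have hconj : starRingEnd ℂ z = (‖z‖ : ℂ) ^ 2 / z := by
    rw [eq_div_iff hz, mul_comm, Complex.mul_conj']
  rw [Zhat, wzeta_eq_add_wzetaTail, Ehat2, hconj, UpperHalfPlane.coe_im]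
  push_cast
  field_simp
  ring

variable {ε : ℝ}

lemma circleIntegral_Phat_sq_mul_Zhat (hε : 0 < ε) (hεr : 2 * ε < EisensteinSeries.r τ) :
    let a := π ^ 2 / 3 * Ehat2 τ E₂
    let c : ℂ := ((1 - π / τ.im * ε ^ 2 : ℝ) : ℂ)
    ∮ z in C(0, ε), Phat τ E₂ z ^ 2 * Zhat τ E₂ z =
      2 * π * I * ((6 * c - 1) * Gk τ 4 + (c - 2) * a ^ 2)
        + ∮ z in C(0, ε), laurentRemainder a c (wpTail τ z / z) (wzetaTail τ z / z ^ 2) z := by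
  intro a c
  have hz0 : ∀ z ∈ sphere (0 : ℂ) ε, z ≠ 0 := fun z hz => ne_zero_of_mem_sphere hε.ne' ⟨z, hz⟩
  have hW := continuousOn_wpTail.mono (sphere_subset_ball_r hεr)
  have hZ := continuousOn_wzetaTail.mono (sphere_subset_ball_r hεr)
  have hEq : Set.EqOn (fun z => Phat τ E₂ z ^ 2 * Zhat τ E₂ z)
      (fun z => (c / z ^ 5 + (2 * c - 1) * a / z ^ 3 + (c - 2) * a ^ 2 / z)
        + (wzetaTail τ z / z ^ 4 + 2 * c * (wpTail τ z / z ^ 3))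
        + laurentRemainder a c (wpTail τ z / z) (wzetaTail τ z / z ^ 2) z) (sphere 0 ε) :=
    fun z hz => by
      dsimp only
      rw [Phat_eq, Zhat_eq τ E₂ (hz0 z hz), mem_sphere_zero_iff_norm.mp hz]
      exact sq_mul_eq_add_laurentRemainder _ _ _ _ (hz0 z hz)
  rw [circleIntegral.integral_congr hε.le hEq, circleIntegral.integral_add,
    circleIntegral.integral_add, circleIntegral.integral_add, circleIntegral.integral_add,
    circleIntegral.integral_add, circleIntegral.integral_const_mul,
    circleIntegral.integral_const_div_pow_of_ne_one _ (by norm_num),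
    circleIntegral.integral_const_div_pow_of_ne_one _ (by norm_num),
    circleIntegral.integral_const_div _ hε.ne', circleIntegral_wpTail_div_pow_three hε hεr,
    circleIntegral_wzetaTail_div_pow_four hε hεr]
  · ring
  all_goals
    refine ContinuousOn.circleIntegrable hε.le ?_
    try unfold laurentRemainder
    fun_prop (disch := simp_all)

lemma eventually_two_mul_lt_r : ∀ᶠ ε in 𝓝[>] (0 : ℝ), 2 * ε < EisensteinSeries.r τ := by
  filter_upwards [Ioo_mem_nhdsGT (half_pos (EisensteinSeries.r_pos τ))] with ε hε
  linarith [hε.2]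

lemma exists_norm_laurentRemainder_Phat_le : ∃ K, ∀ᶠ ε in 𝓝[>] (0 : ℝ),
    ∀ z ∈ sphere (0 : ℂ) ε, ‖laurentRemainder (π ^ 2 / 3 * Ehat2 τ E₂)
      ((1 - π / τ.im * ε ^ 2 : ℝ) : ℂ) (wpTail τ z / z) (wzetaTail τ z / z ^ 2) z‖ ≤ K := by
  set S := invNormCubeSum τ
  have hS : 0 ≤ S := invNormCubeSum_nonneg τ
  have hπ : 0 ≤ π / τ.im := div_nonneg pi_pos.le τ.im_pos.le
  obtain ⟨K, hK⟩ :=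
    exists_norm_laurentRemainder_le (π ^ 2 / 3 * Ehat2 τ E₂) (1 + π / τ.im + 10 * S)
  refine ⟨K, ?_⟩
  filter_upwards [eventually_two_mul_lt_r τ, Ioo_mem_nhdsGT one_pos] with ε hεr hε z hz
  have hzε : ‖z‖ = ε := mem_sphere_zero_iff_norm.mp hz
  have hzr := sphere_subset_ball_r hεr hz
  have hz : 0 < ‖z‖ := hzε ▸ hε.1
  refine hK _ _ _ _ ?_ ?_ ?_ (by linarith [hε.2])
  · have hε2 : π / τ.im * ε ^ 2 ≤ π / τ.im :=
      mul_le_of_le_one_right hπ (pow_le_one₀ hε.1.le hε.2.le)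
    rw [Complex.norm_real, Real.norm_eq_abs, abs_le]
    constructor <;> nlinarith [mul_nonneg hπ (sq_nonneg ε)]
  · rw [norm_div, div_le_iff₀ hz]
    nlinarith [norm_wpTail_le hzr]
  · rw [norm_div, norm_pow, div_le_iff₀ (by positivity)]
    nlinarith [norm_wzetaTail_le hzr, sq_nonneg ‖z‖]

end OnCircle

/-- `Res_{z=0}(P̂² Ẑ dz) = π⁴(E₄ - Ê₂²)/9`, given `G₄ = (π⁴/45) E₄`. -/
theorem res_Phat_sq_Zhat (τ E₂ E₄ : ℂ) (hτ : 0 < τ.im)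
    (hG₄ : Gk τ 4 = ((Real.pi : ℂ) ^ 4 / 45) * E₄) :
    IsRes (fun z => (Phat τ E₂ z) ^ 2 * Zhat τ E₂ z) 0
      ((Real.pi : ℂ) ^ 4 * (E₄ - (Ehat2 τ E₂) ^ 2) / 9) := by
  let τ' : ℍ := ⟨τ, hτ⟩
  let a := π ^ 2 / 3 * Ehat2 τ E₂
  let c (ε : ℝ) : ℂ := ((1 - π / τ.im * ε ^ 2 : ℝ) : ℂ)
  have hlim : Tendsto (fun ε => (6 * c ε - 1) * Gk τ 4 + (c ε - 2) * a ^ 2) (𝓝[>] 0)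
      (𝓝 ((π : ℂ) ^ 4 * (E₄ - Ehat2 τ E₂ ^ 2) / 9)) := by
    have hval : (π : ℂ) ^ 4 * (E₄ - Ehat2 τ E₂ ^ 2) / 9
        = (6 * c 0 - 1) * Gk τ 4 + (c 0 - 2) * a ^ 2 := by
      simp only [c, a, hG₄]
      push_cast
      ring
    rw [hval]
    exact (Continuous.tendsto (by fun_prop) 0).mono_left nhdsWithin_le_nhds
  obtain ⟨K, hK⟩ := exists_norm_laurentRemainder_Phat_le τ' E₂
  refine (add_zero ((π : ℂ) ^ 4 * (E₄ - Ehat2 τ E₂ ^ 2) / 9) ▸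
    hlim.add (circleIntegral.tendsto_two_pi_I_inv_mul_integral_zero hK)).congr' ?_
  filter_upwards [eventually_two_mul_lt_r τ', self_mem_nhdsWithin] with ε hεr hε
  rw [circleIntegral_Phat_sq_mul_Zhat τ' E₂ hε hεr, mul_add, ← mul_assoc,
    inv_mul_cancel₀ (by simp [Real.pi_ne_zero]), one_mul]
  rfl
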